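/- Let P be a two-user q-ary input multiple-access channel (q prime). Then I⁽¹⁾(P⁻) + I⁽¹⁾(P⁺) ≤ 2 I⁽¹⁾(P) and I⁽²⁾(P⁻) + I⁽²⁾(P⁺) ≤ 2 I⁽²⁾(P). -/

import Mathlib

open Finset

namespace PolarMAC

/-- A two-user `q`-ary input multiple-access channel: an arbitrary finite output
alphabet `Y` together with transition probabilities `P x w y = P(y | x, w)`. -/
structure MAC (q : ℕ) where
  Y : Type
  [fintypeY : Fintype Y]
  P : ZMod q → ZMod q → Y → ℝ

attribute [instance] MAC.fintypeY

/-- `M` is a genuine MAC: entries nonnegative and rows summing to one. -/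
def IsMAC {q : ℕ} [Fact (Nat.Prime q)] (M : MAC q) : Prop :=
  (∀ x w y, 0 ≤ M.P x w y) ∧ ∀ x w, ∑ y, M.P x w y = 1

/-- Entropy (base `q`) of a pmf on a finite type. -/
noncomputable def Hq (q : ℕ) {α : Type*} [Fintype α] (p : α → ℝ) : ℝ :=
  ∑ a, -(p a * Real.logb q (p a))

/-- Mutual information (base `q`) between the two coordinates of a joint pmf. -/
noncomputable def MIq (q : ℕ) {α β : Type*} [Fintype α] [Fintype β] (p : α → β → ℝ) : ℝ :=
  Hq q (fun a => ∑ b, p a b) + Hq q (fun b => ∑ a, p a b) - Hq q (fun ab : α × β => p ab.1 ab.2)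

variable (q : ℕ) [Fact (Nat.Prime q)]

/-- `I⁽¹⁾(P) = I(X; Y W)` for independent uniform inputs. -/
noncomputable def I1 (M : MAC q) : ℝ :=
  MIq q (fun (x : ZMod q) (wy : ZMod q × M.Y) => M.P x wy.1 wy.2 / (q : ℝ) ^ 2)

/-- `I⁽²⁾(P) = I(W; Y X)` for independent uniform inputs. -/
noncomputable def I2 (M : MAC q) : ℝ :=
  MIq q (fun (w : ZMod q) (xy : ZMod q × M.Y) => M.P xy.1 w xy.2 / (q : ℝ) ^ 2)

/-- `I⁽¹²⁾(P) = I(X W; Y)` for independent uniform inputs. -/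
noncomputable def I12 (M : MAC q) : ℝ :=
  MIq q (fun (xw : ZMod q × ZMod q) (y : M.Y) => M.P xw.1 xw.2 y / (q : ℝ) ^ 2)

/-- `K(P) = (I⁽¹⁾(P), I⁽²⁾(P), I⁽¹²⁾(P)) ∈ ℝ³`, with the Euclidean norm. -/
noncomputable def Kvec (M : MAC q) : EuclideanSpace ℝ (Fin 3) :=
  WithLp.toLp 2 ![I1 q M, I2 q M, I12 q M]

/-- The transform `P⁻(y₁,y₂ | u₁,v₁) = q⁻² ∑_{u₂,v₂} P(y₁|u₁+u₂, v₁+v₂) P(y₂|u₂,v₂)`. -/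
noncomputable def minusT (M : MAC q) : MAC q where
  Y := M.Y × M.Y
  P := fun u₁ v₁ y =>
    ((q : ℝ) ^ 2)⁻¹ * ∑ u₂, ∑ v₂, M.P (u₁ + u₂) (v₁ + v₂) y.1 * M.P u₂ v₂ y.2

/-- The transform `P⁺(y₁,y₂,u₁,v₁ | u₂,v₂) = q⁻² P(y₁|u₁+u₂, v₁+v₂) P(y₂|u₂,v₂)`,
with output `((y₁, y₂), (u₁, v₁))`. -/
noncomputable def plusT (M : MAC q) : MAC q where
  Y := (M.Y × M.Y) × ZMod q × ZMod q
  P := fun u₂ v₂ z =>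
    ((q : ℝ) ^ 2)⁻¹ * (M.P (z.2.1 + u₂) (z.2.2 + v₂) z.1.1 * M.P u₂ v₂ z.1.2)

/-!
Write `(X₁, W₁) = (U₁ + U₂, V₁ + V₂)` and `(X₂, W₂) = (U₂, V₂)` for the inputs of two independent
uses of `P`, all of `U₁, U₂, V₁, V₂` uniform. Then `I⁽¹⁾(P⁻) = I(U₁; Y₁Y₂V₁)` and
`I⁽¹⁾(P⁺) = I(U₂; Y₁Y₂U₁V₁V₂)`, while by the chain rule
`I(U₁; Y₁Y₂V₁V₂) + I(U₂; Y₁Y₂U₁V₁V₂) = I(X₁X₂; Y₁Y₂W₁W₂) = 2 I⁽¹⁾(P)`.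
So the inequality for `I⁽¹⁾` says `I(U₁; V₂ | Y₁Y₂V₁) ≥ 0`, which is the submodularity
`H(B) + H(ABC) ≤ H(AB) + H(BC)` of entropy for `A = U₁`, `B = (V₁, Y₁, Y₂)`, `C = V₂`.
Exchanging the two users gives the inequality for `I⁽²⁾`.
-/

section Entropy

variable {α β γ : Type*} [Fintype α] [Fintype β] [Fintype γ]

lemma Hq_congr_equiv (b : ℕ) (e : α ≃ β) {p : α → ℝ} {r : β → ℝ} (h : ∀ x, p x = r (e x)) :
    Hq b p = Hq b r :=
  Fintype.sum_equiv e _ _ fun x => by rw [h]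

lemma Hq_eq_sum_negMulLog_div (b : ℕ) (p : α → ℝ) :
    Hq b p = (∑ x, Real.negMulLog (p x)) / Real.log b := by
  simp only [Hq, Real.negMulLog, Real.logb, Finset.sum_div]
  exact Finset.sum_congr rfl fun x _ => by ring

lemma Hq_const_inv_card (b : ℕ) :
    Hq b (fun _ : α => (Fintype.card α : ℝ)⁻¹) = Real.logb b (Fintype.card α) := by
  rcases isEmpty_or_nonempty α with hα | hα
  · simp [Hq]
  · simp [Hq, Real.logb_inv]

lemma Hq_mul (b : ℕ) {p : α → ℝ} {r : β → ℝ} (hp : ∀ x, 0 ≤ p x) (hr : ∀ y, 0 ≤ r y)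
    (hp₁ : ∑ x, p x = 1) (hr₁ : ∑ y, r y = 1) :
    Hq b (fun t : α × β => p t.1 * r t.2) = Hq b p + Hq b r := by
  have key : ∀ x y, -(p x * r y * Real.logb b (p x * r y))
      = r y * -(p x * Real.logb b (p x)) + p x * -(r y * Real.logb b (r y)) := by
    intro x y
    rcases (hp x).eq_or_lt with h | h
    · simp [← h]
    rcases (hr y).eq_or_lt with h' | h'
    · simp [← h']
    rw [Real.logb_mul h.ne' h'.ne']
    ring
  simp only [Hq, Fintype.sum_prod_type, key, Finset.sum_add_distrib, ← Finset.mul_sum,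
    ← Finset.sum_mul, hp₁, hr₁, one_mul]

lemma MIq_comp_equiv_right (b : ℕ) (e : β ≃ γ) (p : α → γ → ℝ) :
    MIq b (fun x y => p x (e y)) = MIq b p := by
  have hα : (fun x => ∑ y, p x (e y)) = fun x => ∑ y, p x y :=
    funext fun x => Equiv.sum_comp e (p x)
  rw [MIq, MIq, hα, Hq_congr_equiv b e (r := fun y => ∑ x, p x y) fun y => rfl,
    Hq_congr_equiv b ((Equiv.refl α).prodCongr e) (p := fun t => p t.1 (e t.2))
      (r := fun t => p t.1 t.2) fun t => rfl]

lemma mul_log_le_of_le {p u v w : ℝ} (hp : 0 ≤ p) (hpu : p ≤ u) (hpv : p ≤ v) (huw : u ≤ w) :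
    p * (Real.log u + Real.log v - Real.log p - Real.log w) ≤ u * v / w - p := by
  rcases hp.eq_or_lt with rfl | hp
  · simpa using div_nonneg (mul_nonneg hpu hpv) (hpu.trans huw)
  have hu := hp.trans_le hpu
  have hv := hp.trans_le hpv
  have hw := hu.trans_le huw
  calc p * (Real.log u + Real.log v - Real.log p - Real.log w)
      = p * Real.log (u * v / (p * w)) := by
        rw [Real.log_div (by positivity) (by positivity), Real.log_mul hu.ne' hv.ne',
          Real.log_mul hp.ne' hw.ne']
        ring
    _ ≤ p * (u * v / (p * w) - 1) := by
        gcongr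
        exact Real.log_le_sub_one_of_pos (by positivity)
    _ = u * v / w - p := by field_simp

lemma sum_marginals_mul_div_eq (f : α → β → γ → ℝ) :
    ∑ x, ∑ y, ∑ z, (∑ z', f x y z') * (∑ x', f x' y z) / (∑ x', ∑ z', f x' y z')
      = ∑ x, ∑ y, ∑ z, f x y z := by
  have hY : ∀ y, ∑ x, ∑ z, (∑ z', f x y z') * (∑ x', f x' y z) / (∑ x', ∑ z', f x' y z')
      = ∑ x, ∑ z, f x y z := by
    intro y
    simp_rw [div_eq_mul_inv, mul_assoc, ← Finset.mul_sum, ← Finset.sum_mul]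
    rw [Finset.sum_comm (f := fun z x => f x y z), ← mul_assoc, mul_self_mul_inv]
  rw [Finset.sum_comm]
  simp_rw [hY]
  exact Finset.sum_comm

/- Each of the four entropies is the `f`-average of `-log` of a marginal; the defect is then
bounded termwise by `log x ≤ x - 1` (`mul_log_le_of_le`). -/
lemma sum_negMulLog_submodular (f : α → β → γ → ℝ) (hf : ∀ x y z, 0 ≤ f x y z) :
    ∑ y, Real.negMulLog (∑ x, ∑ z, f x y z)
        + ∑ t : α × β × γ, Real.negMulLog (f t.1 t.2.1 t.2.2)
      ≤ ∑ t : α × β, Real.negMulLog (∑ z, f t.1 t.2 z)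
        + ∑ t : β × γ, Real.negMulLog (∑ x, f x t.1 t.2) := by
  have hY : ∑ y, Real.negMulLog (∑ x, ∑ z, f x y z)
      = -∑ x, ∑ y, ∑ z, f x y z * Real.log (∑ x', ∑ z', f x' y z') := by
    simp only [Real.negMulLog, neg_mul, Finset.sum_mul, Finset.sum_neg_distrib]
    rw [Finset.sum_comm]
  have hXYZ : ∑ t : α × β × γ, Real.negMulLog (f t.1 t.2.1 t.2.2)
      = -∑ x, ∑ y, ∑ z, f x y z * Real.log (f x y z) := by
    simp only [Real.negMulLog, neg_mul, Fintype.sum_prod_type, Finset.sum_neg_distrib]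
  have hXY : ∑ t : α × β, Real.negMulLog (∑ z, f t.1 t.2 z)
      = -∑ x, ∑ y, ∑ z, f x y z * Real.log (∑ z', f x y z') := by
    simp only [Real.negMulLog, neg_mul, Fintype.sum_prod_type, Finset.sum_mul,
      Finset.sum_neg_distrib]
  have hYZ : ∑ t : β × γ, Real.negMulLog (∑ x, f x t.1 t.2)
      = -∑ x, ∑ y, ∑ z, f x y z * Real.log (∑ x', f x' y z) := by
    simp only [Real.negMulLog, neg_mul, Fintype.sum_prod_type, Finset.sum_mul,
      Finset.sum_neg_distrib]
    rw [Finset.sum_comm (γ := α)]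
    exact congrArg _ (Finset.sum_congr rfl fun y _ => Finset.sum_comm)
  have hterm : ∀ x y z, f x y z * (Real.log (∑ z', f x y z') + Real.log (∑ x', f x' y z)
      - Real.log (f x y z) - Real.log (∑ x', ∑ z', f x' y z'))
      ≤ (∑ z', f x y z') * (∑ x', f x' y z) / (∑ x', ∑ z', f x' y z') - f x y z := fun x y z =>
    mul_log_le_of_le (hf x y z) (single_le_sum (fun z' _ => hf x y z') (mem_univ z))
      (single_le_sum (fun x' _ => hf x' y z) (mem_univ x))
      (single_le_sum (f := fun x' => ∑ z', f x' y z')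
        (fun x' _ => sum_nonneg fun z' _ => hf x' y z') (mem_univ x))
  have hsum := sum_le_sum fun x (_ : x ∈ univ) => sum_le_sum fun y (_ : y ∈ univ) =>
    sum_le_sum fun z (_ : z ∈ univ) => hterm x y z
  simp only [mul_add, mul_sub, sum_add_distrib, sum_sub_distrib,
    sum_marginals_mul_div_eq, sub_self] at hsum
  linarith

lemma Hq_submodular (b : ℕ) (f : α → β → γ → ℝ) (hf : ∀ x y z, 0 ≤ f x y z) :
    Hq b (fun y => ∑ x, ∑ z, f x y z) + Hq b (fun t : α × β × γ => f t.1 t.2.1 t.2.2)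
      ≤ Hq b (fun t : α × β => ∑ z, f t.1 t.2 z) + Hq b (fun t : β × γ => ∑ x, f x t.1 t.2) := by
  simp only [Hq_eq_sum_negMulLog_div, ← add_div]
  exact div_le_div_of_nonneg_right (sum_negMulLog_submodular f hf) (Real.log_natCast_nonneg b)

end Entropy

variable {q}

namespace MAC

noncomputable def law (M : MAC q) (t : ZMod q × ZMod q × M.Y) : ℝ :=
  M.P t.1 t.2.1 t.2.2 / (q : ℝ) ^ 2

noncomputable def lawWY (M : MAC q) (t : ZMod q × M.Y) : ℝ :=
  ∑ x, M.law (x, t)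

/-- The law of `(U₁, (V₁, Y₁, Y₂), V₂)` when `(U₁ + U₂, V₁ + V₂)` and `(U₂, V₂)` are sent over
two independent copies of `M`, with `U₂` summed out. -/
noncomputable def twoUseLaw (M : MAC q) (u₁ : ZMod q) (b : ZMod q × M.Y × M.Y) (v₂ : ZMod q) :
    ℝ :=
  ∑ u₂, M.law (u₁ + u₂, b.1 + v₂, b.2.1) * M.law (u₂, v₂, b.2.2)

def swap {n : ℕ} (M : MAC n) : MAC n :=
  ⟨M.Y, fun x w y => M.P w x y⟩

end MAC

lemma Hq_uniform_zmod : Hq q (fun _ : ZMod q => (q : ℝ)⁻¹) = 1 := by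
  have hq : (1 : ℝ) < q := by exact_mod_cast (Fact.out : q.Prime).one_lt
  simpa [ZMod.card, Real.logb_self_eq_one hq] using Hq_const_inv_card (α := ZMod q) q

lemma I1_eq_of_sum_eq_one {M : MAC q} (hP : ∀ x w, ∑ y, M.P x w y = 1) :
    I1 q M = 1 + Hq q M.lawWY - Hq q M.law := by
  have hX : ∀ x, ∑ t : ZMod q × M.Y, M.P x t.1 t.2 / (q : ℝ) ^ 2 = (q : ℝ)⁻¹ := by
    intro x
    have hq : (q : ℝ) ≠ 0 := Nat.cast_ne_zero.2 (NeZero.ne q)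
    simp only [Fintype.sum_prod_type, ← Finset.sum_div, hP, Finset.sum_const, Finset.card_univ,
      ZMod.card, nsmul_eq_mul, mul_one]
    field_simp
  simp only [I1, MIq, hX, Hq_uniform_zmod]
  rfl

lemma I1_congr {M N : MAC q} (e : M.Y ≃ N.Y) (h : ∀ x w y, M.P x w y = N.P x w (e y)) :
    I1 q M = I1 q N := by
  refine Eq.trans ?_ (MIq_comp_equiv_right q ((Equiv.refl _).prodCongr e) _)
  simp only [I1, h]
  rfl

section Transforms

variable {M : MAC q}

lemma sum_minusT_P (hP : ∀ x w, ∑ y, M.P x w y = 1) (u v : ZMod q) :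
    ∑ y, (minusT q M).P u v y = 1 := by
  have hq : (q : ℝ) ≠ 0 := Nat.cast_ne_zero.2 (NeZero.ne q)
  have hpair : ∀ u₂ v₂, ∑ y : M.Y × M.Y, M.P (u + u₂) (v + v₂) y.1 * M.P u₂ v₂ y.2 = 1 := by
    simp [Fintype.sum_prod_type, ← Finset.mul_sum, hP]
  change ∑ y : M.Y × M.Y, _ = 1
  simp only [minusT]
  rw [← Finset.mul_sum, Finset.sum_comm]
  simp_rw [Finset.sum_comm (γ := M.Y × M.Y), hpair]
  simp [ZMod.card]
  field_simp

lemma sum_plusT_P (hP : ∀ x w, ∑ y, M.P x w y = 1) (u v : ZMod q) :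
    ∑ z, (plusT q M).P u v z = 1 := by
  have hq : (q : ℝ) ≠ 0 := Nat.cast_ne_zero.2 (NeZero.ne q)
  change ∑ z : (M.Y × M.Y) × ZMod q × ZMod q, _ = 1
  simp only [plusT, ← Finset.mul_sum, Fintype.sum_prod_type, ← Finset.sum_mul, hP, mul_one]
  rw [Finset.sum_comm]
  simp_rw [Finset.sum_comm (γ := M.Y), hP]
  simp [ZMod.card]
  field_simp

variable (M)

lemma MAC.law_minusT (u₁ v₁ : ZMod q) (y : M.Y × M.Y) :
    (minusT q M).law (u₁, v₁, y) = ∑ v₂, M.twoUseLaw u₁ (v₁, y) v₂ := by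
  simp only [MAC.law, MAC.twoUseLaw, minusT, Finset.mul_sum, Finset.sum_div]
  rw [Finset.sum_comm]
  refine Finset.sum_congr rfl fun _ _ => Finset.sum_congr rfl fun _ _ => ?_
  ring

lemma MAC.law_plusT (u₂ v₂ : ZMod q) (y : M.Y × M.Y) (u₁ v₁ : ZMod q) :
    (plusT q M).law (u₂, v₂, y, u₁, v₁) = M.law (u₁ + u₂, v₁ + v₂, y.1) * M.law (u₂, v₂, y.2) := by
  simp only [MAC.law, plusT]
  ring

lemma Hq_lawWY_minusT :
    Hq q (minusT q M).lawWY = Hq q (fun b : ZMod q × M.Y × M.Y => ∑ a, ∑ c, M.twoUseLaw a b c) :=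
  Hq_congr_equiv q (Equiv.refl _) fun b =>
    Finset.sum_congr rfl fun a _ => M.law_minusT a b.1 b.2

lemma Hq_law_minusT : Hq q (minusT q M).law
    = Hq q (fun t : ZMod q × ZMod q × M.Y × M.Y => ∑ c, M.twoUseLaw t.1 t.2 c) :=
  Hq_congr_equiv q (Equiv.refl _) fun t => M.law_minusT t.1 t.2.1 t.2.2

lemma Hq_lawWY_plusT : Hq q (plusT q M).lawWY
    = Hq q (fun t : ZMod q × (ZMod q × M.Y × M.Y) × ZMod q => M.twoUseLaw t.1 t.2.1 t.2.2) := by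
  let e : ZMod q × (M.Y × M.Y) × ZMod q × ZMod q ≃ ZMod q × (ZMod q × M.Y × M.Y) × ZMod q :=
    { toFun := fun ⟨v₂, y, u₁, v₁⟩ => (u₁, (v₁, y), v₂)
      invFun := fun ⟨u₁, (v₁, y), v₂⟩ => (v₂, y, u₁, v₁)
      left_inv := fun _ => rfl
      right_inv := fun _ => rfl }
  exact Hq_congr_equiv q e fun ⟨v₂, y, u₁, v₁⟩ =>
    Finset.sum_congr rfl fun u₂ _ => M.law_plusT u₂ v₂ y u₁ v₁

lemma I2_eq_I1_swap : I2 q M = I1 q M.swap := rfl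

lemma I2_minusT : I2 q (minusT q M) = I1 q (minusT q M.swap) :=
  (I2_eq_I1_swap _).trans <| I1_congr (Equiv.refl _) fun _ _ _ => by
    simp only [minusT, MAC.swap]
    exact congrArg _ Finset.sum_comm

lemma I2_plusT : I2 q (plusT q M) = I1 q (plusT q M.swap) :=
  (I2_eq_I1_swap _).trans <|
    I1_congr (Equiv.prodCongr (Equiv.refl _) (Equiv.prodComm _ _)) fun _ _ _ => rfl

end Transforms

namespace IsMAC

variable {M : MAC q}

lemma swap (hM : IsMAC M) : IsMAC M.swap :=
  ⟨fun x w y => hM.1 w x y, fun x w => hM.2 w x⟩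

lemma law_nonneg (hM : IsMAC M) (t : ZMod q × ZMod q × M.Y) : 0 ≤ M.law t :=
  div_nonneg (hM.1 _ _ _) (by positivity)

lemma sum_law (hM : IsMAC M) : ∑ t, M.law t = 1 := by
  have hq : (q : ℝ) ≠ 0 := Nat.cast_ne_zero.2 (NeZero.ne q)
  simp only [MAC.law, Fintype.sum_prod_type, ← Finset.sum_div, hM.2]
  simp [ZMod.card]
  field_simp

lemma lawWY_nonneg (hM : IsMAC M) (t : ZMod q × M.Y) : 0 ≤ M.lawWY t :=
  Finset.sum_nonneg fun _ _ => hM.law_nonneg _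

lemma sum_lawWY (hM : IsMAC M) : ∑ t, M.lawWY t = 1 :=
  calc ∑ t, M.lawWY t = ∑ t, M.law t := by
        simp only [MAC.lawWY]
        rw [Finset.sum_comm]
        exact (Fintype.sum_prod_type _).symm
    _ = 1 := hM.sum_law

lemma twoUseLaw_nonneg (hM : IsMAC M) (a : ZMod q) (b : ZMod q × M.Y × M.Y) (c : ZMod q) :
    0 ≤ M.twoUseLaw a b c :=
  Finset.sum_nonneg fun _ _ => mul_nonneg (hM.law_nonneg _) (hM.law_nonneg _)

lemma Hq_law_plusT (hM : IsMAC M) : Hq q (plusT q M).law = 2 * Hq q M.law := by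
  let e : ZMod q × ZMod q × (M.Y × M.Y) × ZMod q × ZMod q
      ≃ (ZMod q × ZMod q × M.Y) × (ZMod q × ZMod q × M.Y) :=
    { toFun := fun ⟨u₂, v₂, y, u₁, v₁⟩ => ((u₁ + u₂, v₁ + v₂, y.1), (u₂, v₂, y.2))
      invFun := fun ⟨(x₁, w₁, y₁), (x₂, w₂, y₂)⟩ => (x₂, w₂, (y₁, y₂), x₁ - x₂, w₁ - w₂)
      left_inv := fun _ => by simp
      right_inv := fun _ => by simp }
  calc Hq q (plusT q M).law = Hq q (fun t : _ × _ => M.law t.1 * M.law t.2) :=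
        Hq_congr_equiv q e fun ⟨u₂, v₂, y, u₁, v₁⟩ => M.law_plusT u₂ v₂ y u₁ v₁
    _ = 2 * Hq q M.law := by
        rw [Hq_mul q hM.law_nonneg hM.law_nonneg hM.sum_law hM.sum_law, two_mul]

lemma Hq_sum_twoUseLaw (hM : IsMAC M) :
    Hq q (fun t : (ZMod q × M.Y × M.Y) × ZMod q => ∑ a, M.twoUseLaw a t.1 t.2)
      = 2 * Hq q M.lawWY := by
  let e : (ZMod q × M.Y × M.Y) × ZMod q ≃ (ZMod q × M.Y) × (ZMod q × M.Y) :=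
    { toFun := fun ⟨(v₁, y₁, y₂), v₂⟩ => ((v₁ + v₂, y₁), (v₂, y₂))
      invFun := fun ⟨(w₁, y₁), (w₂, y₂)⟩ => ((w₁ - w₂, y₁, y₂), w₂)
      left_inv := fun _ => by simp
      right_inv := fun _ => by simp }
  have h : ∀ v₁ y₁ y₂ v₂, ∑ a, M.twoUseLaw a (v₁, y₁, y₂) v₂
      = M.lawWY (v₁ + v₂, y₁) * M.lawWY (v₂, y₂) := by
    intro v₁ y₁ y₂ v₂
    simp only [MAC.twoUseLaw, MAC.lawWY, Finset.mul_sum]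
    rw [Finset.sum_comm]
    refine Finset.sum_congr rfl fun u₂ _ => ?_
    rw [← Finset.sum_mul]
    congr 1
    exact Equiv.sum_comp (Equiv.addRight u₂) (fun x => M.law (x, v₁ + v₂, y₁))
  calc _ = Hq q (fun t : _ × _ => M.lawWY t.1 * M.lawWY t.2) :=
        Hq_congr_equiv q e fun ⟨⟨v₁, y₁, y₂⟩, v₂⟩ => h v₁ y₁ y₂ v₂
    _ = 2 * Hq q M.lawWY := by
        rw [Hq_mul q hM.lawWY_nonneg hM.lawWY_nonneg hM.sum_lawWY hM.sum_lawWY, two_mul]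

theorem I1_minusT_add_I1_plusT_le (hM : IsMAC M) :
    I1 q (minusT q M) + I1 q (plusT q M) ≤ 2 * I1 q M := by
  have hsub := Hq_submodular q M.twoUseLaw hM.twoUseLaw_nonneg
  rw [hM.Hq_sum_twoUseLaw] at hsub
  rw [I1_eq_of_sum_eq_one (sum_minusT_P hM.2), I1_eq_of_sum_eq_one (sum_plusT_P hM.2),
    I1_eq_of_sum_eq_one hM.2, Hq_lawWY_minusT, Hq_law_minusT, Hq_lawWY_plusT, hM.Hq_law_plusT]
  linarith

end IsMAC

/-- `I⁽¹⁾` and `I⁽²⁾` are supermartingale-decreasing under the polarization transform: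
`I⁽¹⁾(P⁻) + I⁽¹⁾(P⁺) ≤ 2 I⁽¹⁾(P)` and `I⁽²⁾(P⁻) + I⁽²⁾(P⁺) ≤ 2 I⁽²⁾(P)`. -/
theorem I1_I2_supermartingale (q : ℕ) [Fact (Nat.Prime q)] (M : MAC q) (hM : IsMAC M) :
    I1 q (minusT q M) + I1 q (plusT q M) ≤ 2 * I1 q M ∧
    I2 q (minusT q M) + I2 q (plusT q M) ≤ 2 * I2 q M := by
  refine ⟨hM.I1_minusT_add_I1_plusT_le, ?_⟩
  rw [I2_minusT, I2_plusT, I2_eq_I1_swap]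
  exact hM.swap.I1_minusT_add_I1_plusT_le

end PolarMAC
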